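/- arXiv:1304.1639 — 5 statements merged into one kernel-verified Lean document; each statement's English description precedes it below -/
import Mathlib

section
/- Let X be a d-box and let 𝔉 be a proper suit in X, i.e. a family of pairwise dichotomous proper boxes in X. Then ⋃𝔉 = X (that is, 𝔉 is a minimal partition of X) if and only if |𝔉| = 2^d. -/
/-- The subset of the `d`-box `X₁ × ⋯ × X_d` determined by a box
`K = K₁ × ⋯ × K_d`. -/
def boxSet {d : ℕ} {X : Fin d → Type*} (K : ∀ i, Set (X i)) :
    Set (∀ i, X i) :=
  {x | ∀ i, x i ∈ K i}

/-- `K` is a box: each factor is nonempty. -/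
def IsBox {d : ℕ} {X : Fin d → Type*} (K : ∀ i, Set (X i)) : Prop :=
  ∀ i, (K i).Nonempty

/-- `K` is a proper box: each factor is nonempty and proper. -/
def IsProperBox {d : ℕ} {X : Fin d → Type*} (K : ∀ i, Set (X i)) : Prop :=
  ∀ i, (K i).Nonempty ∧ K i ≠ Set.univ

/-- Boxes `K` and `G` are dichotomous: `K_i = X_i \ G_i` for some `i`. -/
def BoxDichotomous {d : ℕ} {X : Fin d → Type*}
    (K G : ∀ i, Set (X i)) : Prop :=
  ∃ i, K i = (G i)ᶜ

/-- A suit: a family of pairwise dichotomous boxes. -/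
def IsSuit {d : ℕ} {X : Fin d → Type*} (𝓕 : Set (∀ i, Set (X i))) : Prop :=
  (∀ K ∈ 𝓕, IsBox K) ∧ 𝓕.Pairwise BoxDichotomous

/-- Boxes `K` and `G` form a twin pair. -/
def BoxTwinPair {d : ℕ} {X : Fin d → Type*}
    (K G : ∀ i, Set (X i)) : Prop :=
  ∃ j, K j = (G j)ᶜ ∧ ∀ i, i ≠ j → K i = G i

universe u

open Classical

/-- auxiliary: the membership code of a point with respect to a box. -/
noncomputable def boxCode {d : ℕ} {X : Fin d → Type u} (x : ∀ i, X i)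
    (K : ∀ i, Set (X i)) : Fin d → Bool :=
  fun i => decide (x i ∈ K i)

lemma boxCode_injOn {d : ℕ} {X : Fin d → Type u}
    {𝓕 : Set (∀ i, Set (X i))} (hd : 𝓕.Pairwise BoxDichotomous)
    (x : ∀ i, X i) : Set.InjOn (boxCode x) 𝓕 := by
  intro K hK G hG hEq
  by_contra hne
  obtain ⟨i, hi⟩ := hd hK hG hne
  have h1 := congrFun hEq i
  rw [show boxCode x K i = decide (x i ∈ K i) from rfl,
      show boxCode x G i = decide (x i ∈ G i) from rfl, hi] at h1
  simp at h1

lemma suit_finite {d : ℕ} {X : Fin d → Type u} [∀ i, Nontrivial (X i)]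
    {𝓕 : Set (∀ i, Set (X i))} (hd : 𝓕.Pairwise BoxDichotomous) :
    𝓕.Finite := by
  have x : ∀ i, X i := fun i => Classical.arbitrary _
  exact Set.Finite.of_finite_image (Set.toFinite _) (boxCode_injOn hd x)

lemma cover_ncard :
    ∀ (d : ℕ) (X : Fin d → Type u) (_ : ∀ i, Nontrivial (X i))
      (𝓕 : Set (∀ i, Set (X i))),
      𝓕.Pairwise BoxDichotomous → (∀ K ∈ 𝓕, IsProperBox K) →
      (⋃ K ∈ 𝓕, boxSet K) = Set.univ → 𝓕.ncard = 2 ^ d := by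
  intro d
  induction d with
  | zero =>
    intro X inst 𝓕 hdich hprop hcov
    have hx : (fun i => i.elim0 : ∀ i : Fin 0, X i) ∈ ⋃ K ∈ 𝓕, boxSet K := by
      rw [hcov]; exact Set.mem_univ _
    rw [Set.mem_iUnion₂] at hx
    obtain ⟨K, hK, -⟩ := hx
    have hsub : 𝓕 ⊆ {K} := by
      intro G hG
      rcases eq_or_ne G K with h | h
      · simp [h]
      · obtain ⟨i, -⟩ := hdich hG hK h
        exact i.elim0
    have h1 : 𝓕 = {K} := Set.Subset.antisymm hsub (by simp [hK])
    simp [h1]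
  | succ d ih =>
    intro X inst 𝓕 hdich hprop hcov
    haveI : ∀ i, Nonempty (X i) := fun i => (inst i).to_nonempty
    -- the restriction to the first d coordinates
    set res : (∀ i : Fin (d+1), Set (X i)) → (∀ i : Fin d, Set (X i.castSucc)) :=
      fun K i => K i.castSucc with hres
    -- pointwise covering
    have mem_cov : ∀ x : (∀ i, X i), ∃ K ∈ 𝓕, ∀ i, x i ∈ K i := by
      intro x
      have h := Set.eq_univ_iff_forall.mp hcov x
      rw [Set.mem_iUnion₂] at h
      obtain ⟨K, hK, hxK⟩ := h
      exact ⟨K, hK, hxK⟩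
    -- key structural facts about subfamilies avoiding last-coordinate dichotomies
    have key : ∀ S ⊆ 𝓕, (∀ K ∈ S, ∀ G ∈ S, K (Fin.last d) ≠ (G (Fin.last d))ᶜ) →
        Set.InjOn res S ∧ (res '' S).Pairwise BoxDichotomous ∧
          (∀ K ∈ res '' S, IsProperBox K) := by
      intro S hS hP
      have hdi : ∀ K ∈ S, ∀ G ∈ S, K ≠ G →
          ∃ i : Fin d, K i.castSucc = (G i.castSucc)ᶜ := by
        intro K hK G hG hne
        obtain ⟨i0, hi0⟩ := hdich (hS hK) (hS hG) hne
        rcases eq_or_ne i0 (Fin.last d) with heq | h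
        · rw [heq] at hi0
          exact absurd hi0 (hP K hK G hG)
        · obtain ⟨i', rfl⟩ := Fin.exists_castSucc_eq.mpr h
          exact ⟨i', hi0⟩
      have hinj : Set.InjOn res S := by
        intro K hK G hG hEq
        by_contra hne
        obtain ⟨i, hi⟩ := hdi K hK G hG hne
        have hKG : K i.castSucc = G i.castSucc := congrFun hEq i
        obtain ⟨a, ha⟩ := (hprop K (hS hK) i.castSucc).1
        have h2 : a ∈ (G i.castSucc)ᶜ := hi ▸ ha
        have h3 : a ∈ G i.castSucc := hKG ▸ ha
        exact h2 h3
      refine ⟨hinj, ?_, ?_⟩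
      · rintro K' ⟨K, hK, rfl⟩ G' ⟨G, hG, rfl⟩ hne'
        have hne : K ≠ G := fun h => hne' (by rw [h])
        obtain ⟨i, hi⟩ := hdi K hK G hG hne
        exact ⟨i, hi⟩
      · rintro K' ⟨K, hK, rfl⟩ i
        exact hprop K (hS hK) i.castSucc
    -- the "avoiding" families contain something over every base point
    have hT : ∀ (y : ∀ i : Fin d, X i.castSucc) (c : X (Fin.last d)),
        ∃ K ∈ 𝓕, (∀ i, y i ∈ K i.castSucc) ∧ c ∉ K (Fin.last d) := by
      intro y c
      by_contra hcon
      push_neg at hcon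
      have hsub : ∀ K ∈ 𝓕, ∀ G ∈ 𝓕, (∀ i, y i ∈ K i.castSucc) →
          (∀ i, y i ∈ G i.castSucc) → K = G := by
        intro K hK G hG hyK hyG
        by_contra hne
        obtain ⟨i0, hi0⟩ := hdich hK hG hne
        rcases eq_or_ne i0 (Fin.last d) with heq | h
        · rw [heq] at hi0
          have h1 : c ∈ K (Fin.last d) := hcon K hK hyK
          have h2 : c ∈ G (Fin.last d) := hcon G hG hyG
          rw [hi0] at h1
          exact h1 h2
        · obtain ⟨i', rfl⟩ := Fin.exists_castSucc_eq.mpr h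
          have h1 : y i' ∈ (G i'.castSucc)ᶜ := hi0 ▸ hyK i'
          exact h1 (hyG i')
      obtain ⟨K0, hK0, hxK0⟩ := mem_cov (Fin.snoc y c)
      have hyK0 : ∀ i, y i ∈ K0 i.castSucc := fun i => by
        have := hxK0 i.castSucc
        rwa [Fin.snoc_castSucc] at this
      obtain ⟨c', hc'⟩ := (Set.ne_univ_iff_exists_notMem _).mp
        (hprop K0 hK0 (Fin.last d)).2
      obtain ⟨K1, hK1, hxK1⟩ := mem_cov (Fin.snoc y c')
      have hyK1 : ∀ i, y i ∈ K1 i.castSucc := fun i => by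
        have := hxK1 i.castSucc
        rwa [Fin.snoc_castSucc] at this
      have hKe : K1 = K0 := hsub K1 hK1 K0 hK0 hyK1 hyK0
      have hc'' : c' ∈ K1 (Fin.last d) := by
        have := hxK1 (Fin.last d)
        rwa [Fin.snoc_last] at this
      exact hc' (hKe ▸ hc'')
    -- pick a point in the last coordinate and split the suit
    obtain ⟨c⟩ := ‹∀ i, Nonempty (X i)› (Fin.last d)
    set Fin' : Set (∀ i : Fin (d+1), Set (X i)) :=
      {K | K ∈ 𝓕 ∧ c ∈ K (Fin.last d)} with hFin'
    set Fout : Set (∀ i : Fin (d+1), Set (X i)) :=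
      {K | K ∈ 𝓕 ∧ c ∉ K (Fin.last d)} with hFout
    have hFinS : Fin' ⊆ 𝓕 := fun K hK => hK.1
    have hFoutS : Fout ⊆ 𝓕 := fun K hK => hK.1
    have hPin : ∀ K ∈ Fin', ∀ G ∈ Fin', K (Fin.last d) ≠ (G (Fin.last d))ᶜ := by
      intro K hK G hG h
      have h1 := hK.2
      rw [h] at h1
      exact h1 hG.2
    have hPout : ∀ K ∈ Fout, ∀ G ∈ Fout, K (Fin.last d) ≠ (G (Fin.last d))ᶜ := by
      intro K hK G hG h
      apply hG.2
      by_contra h2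
      exact hK.2 (h ▸ (Set.mem_compl h2 : c ∈ (G (Fin.last d))ᶜ))
    obtain ⟨hinj_in, hdich_in, hprop_in⟩ := key Fin' hFinS hPin
    obtain ⟨hinj_out, hdich_out, hprop_out⟩ := key Fout hFoutS hPout
    -- the restricted families cover the (d)-box
    have hcov_in : (⋃ K ∈ res '' Fin', boxSet K) = Set.univ := by
      rw [Set.eq_univ_iff_forall]
      intro y
      rw [Set.mem_iUnion₂]
      obtain ⟨K, hK, hxK⟩ := mem_cov (Fin.snoc y c)
      have hc : c ∈ K (Fin.last d) := by
        have := hxK (Fin.last d)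
        rwa [Fin.snoc_last] at this
      refine ⟨res K, ⟨K, ⟨hK, hc⟩, rfl⟩, fun i => ?_⟩
      have := hxK i.castSucc
      rwa [Fin.snoc_castSucc] at this
    have hcov_out : (⋃ K ∈ res '' Fout, boxSet K) = Set.univ := by
      rw [Set.eq_univ_iff_forall]
      intro y
      rw [Set.mem_iUnion₂]
      obtain ⟨K, hK, hyK, hcK⟩ := hT y c
      exact ⟨res K, ⟨K, ⟨hK, hcK⟩, rfl⟩, fun i => hyK i⟩
    -- apply the induction hypothesis
    have hcard_in : (res '' Fin').ncard = 2 ^ d :=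
      ih (fun i : Fin d => X i.castSucc) (fun i => inst _) _ hdich_in hprop_in hcov_in
    have hcard_out : (res '' Fout).ncard = 2 ^ d :=
      ih (fun i : Fin d => X i.castSucc) (fun i => inst _) _ hdich_out hprop_out hcov_out
    have hin : Fin'.ncard = 2 ^ d := by
      rw [← Set.ncard_image_of_injOn hinj_in]; exact hcard_in
    have hout : Fout.ncard = 2 ^ d := by
      rw [← Set.ncard_image_of_injOn hinj_out]; exact hcard_out
    have hfin : 𝓕.Finite := @suit_finite _ _ inst _ hdich
    have hun : 𝓕 = Fin' ∪ Fout := by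
      ext K
      constructor
      · intro hK
        by_cases h : c ∈ K (Fin.last d)
        · exact Or.inl ⟨hK, h⟩
        · exact Or.inr ⟨hK, h⟩
      · rintro (h | h) <;> exact h.1
    have hdisj : Disjoint Fin' Fout := by
      rw [Set.disjoint_left]
      rintro K ⟨-, h1⟩ ⟨-, h2⟩
      exact h2 h1
    rw [hun, Set.ncard_union_eq hdisj (hfin.subset hFinS) (hfin.subset hFoutS),
      hin, hout]
    ring

/-- A proper suit `𝓕` in a `d`-box `X` is a minimal partition of `X`
(i.e. `⋃𝓕 = X`) if and only if `|𝓕| = 2^d`. -/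
theorem minimalPartition_iff_card_eq_two_pow {d : ℕ} {X : Fin d → Type*}
    [∀ i, Nontrivial (X i)]
    (𝓕 : Set (∀ i, Set (X i)))
    (h𝓕 : IsSuit 𝓕) (h𝓕p : ∀ K ∈ 𝓕, IsProperBox K) :
    (⋃ K ∈ 𝓕, boxSet K) = Set.univ ↔ 𝓕.ncard = 2 ^ d := by
  constructor
  · exact cover_ncard d X (fun i => inferInstance) 𝓕 h𝓕.2 h𝓕p
  · intro hcard
    rw [Set.eq_univ_iff_forall]
    intro x
    rw [Set.mem_iUnion₂]
    have hinj := boxCode_injOn h𝓕.2 x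
    have himg : boxCode x '' 𝓕 = Set.univ := by
      apply Set.eq_of_subset_of_ncard_le (Set.subset_univ _) _ (Set.toFinite _)
      rw [Set.ncard_image_of_injOn hinj, hcard, Set.ncard_univ]
      simp [Nat.card_eq_fintype_card]
    have hmem : (fun _ => true) ∈ boxCode x '' 𝓕 := by
      rw [himg]; exact Set.mem_univ _
    obtain ⟨K, hK, hcode⟩ := hmem
    refine ⟨K, hK, fun i => ?_⟩
    have h1 := congrFun hcode i
    rw [show boxCode x K i = decide (x i ∈ K i) from rfl] at h1
    exact of_decide_eq_true h1
end

section
/- Let S be a finite alphabet with complementation and let w, u, v ∈ S^d satisfy w̌ ∩ ǔ ≠ ∅ and w̌ ∩ v̌ ≠ ∅. If the boxes w̌ ∩ ǔ and w̌ ∩ v̌ form a twin pair in the d-box w̌, i.e. there is j ∈ [d] such that Ew_j ∩ Eu_j = Ew_j \ (Ew_j ∩ Ev_j) and Ew_i ∩ Eu_i = Ew_i ∩ Ev_i for every i ≠ j, then u and v form a twin pair: u_j = v_j' and u_i = v_i for every i ≠ j. -/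
/-- `ES` is the set of all `B ⊆ S` containing exactly one letter from each
complementary pair `{s, s'}`. -/
def ESet {S : Type*} (c : S → S) : Set (Set S) :=
  {B | ∀ s, s ∈ B ↔ c s ∉ B}

/-- `Es = {B ∈ ES : s ∈ B}`. -/
def Eltr {S : Type*} (c : S → S) (s : S) : Set (Set S) :=
  {B | B ∈ ESet c ∧ s ∈ B}

/-- The equicomplementary realization `v̌ = Ev₁ × ⋯ × Ev_d` of a word `v ∈ S^d`,
viewed as a box in the `d`-box `(ES)^d`. -/
def realize {S : Type*} (c : S → S) {d : ℕ} (v : Fin d → S) :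
    Set (Fin d → Set S) :=
  {B | ∀ i, B i ∈ Eltr c (v i)}

/-- Words `u, v ∈ S^d` are dichotomous: some coordinate carries complementary
letters. -/
def Dichotomous {S : Type*} (c : S → S) {d : ℕ} (u v : Fin d → S) : Prop :=
  ∃ j, v j = c (u j)

/-- Words `u, v ∈ S^d` form a twin pair. -/
def TwinPair {S : Type*} (c : S → S) {d : ℕ} (u v : Fin d → S) : Prop :=
  ∃ j, v j = c (u j) ∧ ∀ i, i ≠ j → u i = v i

/-- A polybox code: a set of pairwise dichotomous words. -/
def PolyboxCode {S : Type*} (c : S → S) {d : ℕ} (V : Set (Fin d → S)) : Prop :=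
  ∀ u ∈ V, ∀ v ∈ V, u ≠ v → Dichotomous c u v

/-- Polybox codes `V, W ⊆ S^d` are equivalent if
`⋃_{v ∈ V} v̌ = ⋃_{w ∈ W} w̌`. -/
def Equivalent {S : Type*} (c : S → S) {d : ℕ}
    (V W : Set (Fin d → S)) : Prop :=
  (⋃ v ∈ V, realize c v) = ⋃ w ∈ W, realize c w

/-- A polybox code `V ⊆ S^d` is rigid if every polybox code equivalent to `V`
equals `V`. -/
def Rigid {S : Type*} (c : S → S) {d : ℕ} (V : Set (Fin d → S)) : Prop :=
  ∀ W : Set (Fin d → S), PolyboxCode c W → Equivalent c V W → W = V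

/-! Completing a set of letters that contains no complementary pair to a member of `ES`
(along a well-order, pair by pair) shows that `Es ∩ Ea` determines `a` once `a ≠ s'`: if
`b ∉ {s, a}`, some member of `ES` contains `s`, `a` and `b'`. Nonemptiness of `w̌ ∩ ǔ` gives
`u_i ≠ w_i'`, and `Ew_j \ Ev_j = Ew_j ∩ Ev_j'`, so the twin-pair condition on the boxes can be
read off coordinatewise. -/

section Realization

variable {S : Type*} {c : S → S}

theorem exists_mem_ESet_superset (hc : Function.Involutive c) (hne : ∀ s, c s ≠ s)
    {T : Set S} (hT : ∀ t ∈ T, c t ∉ T) : ∃ B ∈ ESet c, T ⊆ B := by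
  let r := WellOrderingRel (α := S)
  refine ⟨{x | x ∈ T ∨ c x ∉ T ∧ r x (c x)}, fun x => ?_, fun t ht => Or.inl ht⟩
  simp only [Set.mem_ofPred_eq, hc x]
  by_cases hx : x ∈ T
  · simp [hx, hT x hx]
  by_cases hcx : c x ∈ T
  · simp [hx, hcx]
  simp only [hx, hcx, false_or, not_false_eq_true, true_and]
  rcases trichotomous_of r x (c x) with h | h | h
  · exact iff_of_true h (asymm h)
  · exact absurd h.symm (hne x)
  · exact iff_of_false (asymm h) (not_not.mpr h)

theorem ne_of_mem_Eltr_of_mem_Eltr {s a : S} {B : Set S} (hs : B ∈ Eltr c s)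
    (ha : B ∈ Eltr c a) : a ≠ c s := by
  rintro rfl
  exact (hs.1 s).mp hs.2 ha.2

theorem Eltr_diff_Eltr (hc : Function.Involutive c) (s b : S) :
    Eltr c s \ Eltr c b = Eltr c s ∩ Eltr c (c b) := by
  ext B
  simp only [Eltr, Set.mem_sdiff, Set.mem_inter_iff, Set.mem_ofPred_eq]
  constructor
  · rintro ⟨⟨hB, hs⟩, hb⟩
    exact ⟨⟨hB, hs⟩, hB, (hB (c b)).mpr (by rw [hc b]; exact fun h => hb ⟨hB, h⟩)⟩
  · rintro ⟨hs, hB, hcb⟩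
    exact ⟨hs, fun ⟨_, hb⟩ => (hB b).mp hb hcb⟩

theorem eq_or_eq_of_Eltr_inter_subset (hc : Function.Involutive c) (hne : ∀ s, c s ≠ s)
    {s a b : S} (ha : a ≠ c s) (h : Eltr c s ∩ Eltr c a ⊆ Eltr c b) : b = s ∨ b = a := by
  by_contra! hb
  have hT : ∀ t ∈ ({s, a, c b} : Set S), c t ∉ ({s, a, c b} : Set S) := by
    have hcc : ∀ x, c (c x) = x := hc
    simp only [Set.mem_insert_iff, Set.mem_singleton_iff]
    grind
  obtain ⟨B, hB, hsab⟩ := exists_mem_ESet_superset hc hne hT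
  have hbB : b ∈ B := (h ⟨⟨hB, hsab (by simp)⟩, hB, hsab (by simp)⟩).2
  exact (hB b).mp hbB (hsab (by simp))

theorem eq_of_Eltr_inter_eq (hc : Function.Involutive c) (hne : ∀ s, c s ≠ s)
    {s a b : S} (ha : a ≠ c s) (h : Eltr c s ∩ Eltr c a = Eltr c s ∩ Eltr c b) : a = b := by
  obtain rfl | rfl := eq_or_eq_of_Eltr_inter_subset hc hne ha (h.le.trans Set.inter_subset_right)
  · obtain rfl | rfl := eq_or_eq_of_Eltr_inter_subset hc hne (hne b).symm
      (h.ge.trans Set.inter_subset_right) <;> rfl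
  · rfl

end Realization

theorem twinPair_of_realization_twinPair_general {S : Type*} (c : S → S)
    (hinv : ∀ s, c (c s) = s) (hne : ∀ s, c s ≠ s) {d : ℕ}
    (w u v : Fin d → S)
    (hwu : (realize c w ∩ realize c u).Nonempty)
    (j : Fin d)
    (hj : Eltr c (w j) ∩ Eltr c (u j) =
      Eltr c (w j) \ (Eltr c (w j) ∩ Eltr c (v j)))
    (hj' : ∀ i, i ≠ j → Eltr c (w i) ∩ Eltr c (u i) = Eltr c (w i) ∩ Eltr c (v i)) :
    u j = c (v j) ∧ ∀ i, i ≠ j → u i = v i := by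
  obtain ⟨x, hxw, hxu⟩ := hwu
  have hu : ∀ i, u i ≠ c (w i) := fun i => ne_of_mem_Eltr_of_mem_Eltr (hxw i) (hxu i)
  rw [Set.sdiff_self_inter, Eltr_diff_Eltr hinv] at hj
  exact ⟨eq_of_Eltr_inter_eq hinv hne (hu j) hj,
    fun i hi => eq_of_Eltr_inter_eq hinv hne (hu i) (hj' i hi)⟩

/-- If the nonempty boxes `w̌ ∩ ǔ` and `w̌ ∩ v̌` form a twin pair in the `d`-box
`w̌`, then the words `u` and `v` form a twin pair: `u_j = v_j'` and `u_i = v_i`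
for every `i ≠ j`. -/
theorem twinPair_of_realization_twinPair {S : Type*} [Fintype S] (c : S → S)
    (hinv : ∀ s, c (c s) = s) (hne : ∀ s, c s ≠ s) {d : ℕ}
    (w u v : Fin d → S)
    (hwu : (realize c w ∩ realize c u).Nonempty)
    (hwv : (realize c w ∩ realize c v).Nonempty)
    (j : Fin d)
    (hj : Eltr c (w j) ∩ Eltr c (u j) =
      Eltr c (w j) \ (Eltr c (w j) ∩ Eltr c (v j)))
    (hj' : ∀ i, i ≠ j → Eltr c (w i) ∩ Eltr c (u i) = Eltr c (w i) ∩ Eltr c (v i)) :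
    u j = c (v j) ∧ ∀ i, i ≠ j → u i = v i :=
  twinPair_of_realization_twinPair_general c hinv hne w u v hwu j hj hj'
end

section
/- Let X = X_1 × ⋯ × X_d be a finite d-box and let 𝔉 and 𝔊 be suits for the same polybox F ⊆ X. Let S be the alphabet {(A, i) : i ∈ [d], ∅ ≠ A ⊊ X_i} with complementation (A, i)' = (X_i \ A, i), and to every box K in X assign the word w(K) ∈ (*S)^d with w(K)_i = (K_i, i) if K_i ≠ X_i and w(K)_i = * if K_i = X_i. Then the polybox codes V = {w(K) : K ∈ 𝔉} and W = {w(G) : G ∈ 𝔊} are equivalent, i.e. ⋃_{v ∈ V} v̌ = ⋃_{w ∈ W} w̌. -/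
/-- `Es` for letters of `*S`: `E* = ES` (where `* = none`) and
`Es = {B ∈ ES : s ∈ B}` for `s ∈ S`. -/
def EltrStar {S : Type*} (c : S → S) : Option S → Set (Set S)
  | none => ESet c
  | some s => {B | B ∈ ESet c ∧ s ∈ B}

/-- The equicomplementary realization `v̌ = Ev₁ × ⋯ × Ev_d ⊆ (ES)^d` of a word
`v ∈ (*S)^d`. -/
def realizeStar {S : Type*} (c : S → S) {d : ℕ} (v : Fin d → Option S) :
    Set (Fin d → Set S) :=
  {B | ∀ i, B i ∈ EltrStar c (v i)}

/-- The alphabet `S = {(A, i) : i ∈ [d], ∅ ≠ A ⊊ Xᵢ}` associated with a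
`d`-box `X`. -/
def BoxAlphabet {d : ℕ} (X : Fin d → Type*) :=
  Σ i : Fin d, {A : Set (X i) // A.Nonempty ∧ A ≠ Set.univ}

/-- The complementation `(A, i)' = (Xᵢ \ A, i)` on `BoxAlphabet X`. -/
def boxCompl {d : ℕ} {X : Fin d → Type*} :
    BoxAlphabet X → BoxAlphabet X :=
  fun p => ⟨p.1, ⟨(p.2 : Set (X p.1))ᶜ,
    Set.nonempty_compl.mpr p.2.2.2,
    fun h => p.2.2.1.ne_empty (Set.compl_univ_iff.mp h)⟩⟩

open Classical in
/-- The word `w(K) ∈ (*S)^d` assigned to a box `K`: `w(K)ᵢ = (Kᵢ, i)` if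
`Kᵢ ≠ Xᵢ`, and `w(K)ᵢ = *` if `Kᵢ = Xᵢ`. -/
noncomputable def wordOf {d : ℕ} {X : Fin d → Type*} (K : ∀ i, Set (X i)) :
    Fin d → Option (BoxAlphabet X) :=
  fun i => if h : (K i).Nonempty ∧ K i ≠ Set.univ then some ⟨i, ⟨K i, h⟩⟩
    else none

open Set

def IsComplSelector {α : Type*} (𝒜 : Set (Set α)) : Prop :=
  univ ∈ 𝒜 ∧ ∀ A, A ∈ 𝒜 ↔ Aᶜ ∉ 𝒜

section OneDimensional

variable {α : Type*} {𝒜 𝒦 : Set (Set α)}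

theorem IsComplSelector.empty_notMem (h𝒜 : IsComplSelector 𝒜) : ∅ ∉ 𝒜 := by
  simpa using (h𝒜.2 univ).1 h𝒜.1

theorem sUnion_eq_of_pairwise_compl (h𝒦 : 𝒦.Pairwise (fun A B => A = Bᶜ)) {A : Set α}
    (hA : A ∈ 𝒦) (hAc : Aᶜ ∉ 𝒦) : ⋃₀ 𝒦 = A := by
  refine Subset.antisymm (sUnion_subset fun B hB => ?_) (subset_sUnion_of_mem hA)
  rcases eq_or_ne B A with rfl | hBA
  · exact subset_rfl
  · exact absurd (h𝒦 hB hA hBA ▸ hB) hAc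

theorem sUnion_eq_univ_of_compl_mem {A : Set α} (hA : A ∈ 𝒦) (hAc : Aᶜ ∈ 𝒦) :
    ⋃₀ 𝒦 = univ :=
  eq_univ_of_forall fun x => (em (x ∈ A)).elim (fun h => ⟨A, hA, h⟩) fun h => ⟨Aᶜ, hAc, h⟩

theorem exists_mem_iff_sUnion_mem (h𝒜 : IsComplSelector 𝒜)
    (h𝒦 : 𝒦.Pairwise (fun A B => A = Bᶜ)) : (∃ A ∈ 𝒦, A ∈ 𝒜) ↔ ⋃₀ 𝒦 ∈ 𝒜 := by
  constructor
  · rintro ⟨A, hA, hA𝒜⟩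
    by_cases hAc : Aᶜ ∈ 𝒦
    · exact sUnion_eq_univ_of_compl_mem hA hAc ▸ h𝒜.1
    · exact sUnion_eq_of_pairwise_compl h𝒦 hA hAc ▸ hA𝒜
  · intro hU
    obtain ⟨-, A, hA, -⟩ : (⋃₀ 𝒦).Nonempty :=
      nonempty_iff_ne_empty.2 fun h => h𝒜.empty_notMem (h ▸ hU)
    by_cases hAc : Aᶜ ∈ 𝒦
    · by_cases hA𝒜 : A ∈ 𝒜
      · exact ⟨A, hA, hA𝒜⟩
      · exact ⟨Aᶜ, hAc, not_not.1 (mt (h𝒜.2 A).2 hA𝒜)⟩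
    · exact ⟨A, hA, sUnion_eq_of_pairwise_compl h𝒦 hA hAc ▸ hU⟩

end OneDimensional

section BoxSection

variable {n : ℕ} {X : Fin (n + 1) → Type*}

def boxSection (𝓕 : Set (∀ i, Set (X i))) (x : X (Fin.last n)) :
    Set (∀ i : Fin n, Set (X i.castSucc)) :=
  Fin.init '' {K | K ∈ 𝓕 ∧ x ∈ K (Fin.last n)}

theorem pairwise_boxDichotomous_boxSection {𝓕 : Set (∀ i, Set (X i))}
    (h𝓕 : 𝓕.Pairwise BoxDichotomous) (x : X (Fin.last n)) :
    (boxSection 𝓕 x).Pairwise BoxDichotomous := by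
  rintro _ ⟨K, ⟨hK, hxK⟩, rfl⟩ _ ⟨G, ⟨hG, hxG⟩, rfl⟩ hne
  obtain ⟨j, hj⟩ := h𝓕 hK hG fun h => hne (h ▸ rfl)
  rcases Fin.eq_castSucc_or_eq_last j with ⟨i, rfl⟩ | rfl
  · exact ⟨i, hj⟩
  · rw [hj] at hxK
    exact absurd hxG hxK

theorem snoc_mem_boxSet_iff {K : ∀ i, Set (X i)} {y : ∀ i : Fin n, X i.castSucc}
    {x : X (Fin.last n)} :
    Fin.snoc y x ∈ boxSet K ↔ y ∈ boxSet (Fin.init K) ∧ x ∈ K (Fin.last n) := by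
  simp [boxSet, Fin.forall_fin_succ', Fin.init]

theorem iUnion_boxSection (𝓕 : Set (∀ i, Set (X i))) (x : X (Fin.last n)) :
    ⋃ L ∈ boxSection 𝓕 x, boxSet L = {y | Fin.snoc y x ∈ ⋃ K ∈ 𝓕, boxSet K} := by
  ext y
  simp [boxSection, snoc_mem_boxSet_iff, and_comm, and_left_comm]

theorem exists_forall_mem_iff_boxSection {𝒜 : ∀ i, Set (Set (X i))}
    (h𝒜 : ∀ i, IsComplSelector (𝒜 i)) {𝓕 : Set (∀ i, Set (X i))}
    (h𝓕 : 𝓕.Pairwise BoxDichotomous) :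
    (∃ K ∈ 𝓕, ∀ i, K i ∈ 𝒜 i) ↔
      {x | ∃ L ∈ boxSection 𝓕 x, ∀ i, L i ∈ 𝒜 i.castSucc} ∈ 𝒜 (Fin.last n) := by
  set 𝒦 := (· (Fin.last n)) '' {K | K ∈ 𝓕 ∧ ∀ i : Fin n, K i.castSucc ∈ 𝒜 i.castSucc}
  have h𝒦 : 𝒦.Pairwise (fun A B => A = Bᶜ) := by
    rintro _ ⟨K, ⟨hK, hK𝒜⟩, rfl⟩ _ ⟨G, ⟨hG, hG𝒜⟩, rfl⟩ hne
    obtain ⟨j, hj⟩ := h𝓕 hK hG fun h => hne (h ▸ rfl)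
    rcases Fin.eq_castSucc_or_eq_last j with ⟨i, rfl⟩ | rfl
    · exact absurd (hj ▸ hK𝒜 i) (((h𝒜 _).2 _).1 (hG𝒜 i))
    · exact hj
  have hU : {x | ∃ L ∈ boxSection 𝓕 x, ∀ i, L i ∈ 𝒜 i.castSucc} = ⋃₀ 𝒦 := by
    ext x
    simp [boxSection, 𝒦, Fin.init, and_comm, and_left_comm]
  rw [hU, ← exists_mem_iff_sUnion_mem (h𝒜 _) h𝒦]
  simp [𝒦, Fin.forall_fin_succ', and_assoc]

end BoxSection

theorem exists_forall_mem_iff_of_iUnion_eq {d : ℕ} {X : Fin d → Type*}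
    {𝒜 : ∀ i, Set (Set (X i))} (h𝒜 : ∀ i, IsComplSelector (𝒜 i))
    {𝓕 𝓖 : Set (∀ i, Set (X i))} (h𝓕 : 𝓕.Pairwise BoxDichotomous)
    (h𝓖 : 𝓖.Pairwise BoxDichotomous) (h : ⋃ K ∈ 𝓕, boxSet K = ⋃ G ∈ 𝓖, boxSet G) :
    (∃ K ∈ 𝓕, ∀ i, K i ∈ 𝒜 i) ↔ ∃ G ∈ 𝓖, ∀ i, G i ∈ 𝒜 i := by
  induction d with
  | zero =>
    simpa [boxSet] using congrArg (finZeroElim ∈ ·) h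
  | succ n ih =>
    rw [exists_forall_mem_iff_boxSection h𝒜 h𝓕, exists_forall_mem_iff_boxSection h𝒜 h𝓖]
    suffices hx : ∀ x, (∃ L ∈ boxSection 𝓕 x, ∀ i, L i ∈ 𝒜 i.castSucc) ↔
        ∃ L ∈ boxSection 𝓖 x, ∀ i, L i ∈ 𝒜 i.castSucc by
      rw [Set.ext hx]
    intro x
    refine ih (fun i => h𝒜 _) (pairwise_boxDichotomous_boxSection h𝓕 x)
      (pairwise_boxDichotomous_boxSection h𝓖 x) ?_
    rw [iUnion_boxSection, iUnion_boxSection, h]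

section Realization

variable {d : ℕ} {X : Fin d → Type*}

/-- `univ` is included because `wordOf` encodes a full factor by `*`. -/
def selectedSets (β : Set (BoxAlphabet X)) (i : Fin d) : Set (Set (X i)) :=
  {A | A = univ ∨ ∃ h : A.Nonempty ∧ A ≠ univ, ⟨i, A, h⟩ ∈ β}

theorem mem_selectedSets_iff {β : Set (BoxAlphabet X)} {i : Fin d} {A : Set (X i)}
    (hA : A.Nonempty ∧ A ≠ univ) : A ∈ selectedSets β i ↔ ⟨i, A, hA⟩ ∈ β := by
  simp [selectedSets, hA.2, hA.1]

theorem isComplSelector_selectedSets {β : Set (BoxAlphabet X)} {i : Fin d} [Nonempty (X i)]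
    (hβ : β ∈ ESet boxCompl) : IsComplSelector (selectedSets β i) := by
  refine ⟨Or.inl rfl, fun A => ?_⟩
  by_cases hA : A = univ
  · subst hA
    simp [selectedSets, empty_ne_univ]
  by_cases hA₀ : A = ∅
  · subst hA₀
    simpa [selectedSets] using hA
  have hA' : A.Nonempty ∧ A ≠ univ := ⟨nonempty_iff_ne_empty.2 hA₀, hA⟩
  have hAc : Aᶜ.Nonempty ∧ Aᶜ ≠ univ := ⟨nonempty_compl.2 hA, compl_ne_univ.2 hA'.1⟩
  rw [mem_selectedSets_iff hA', mem_selectedSets_iff hAc]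
  exact hβ _

theorem mem_eltrStar_wordOf_iff {K : ∀ i, Set (X i)} {i : Fin d} (hK : (K i).Nonempty)
    {β : Set (BoxAlphabet X)} :
    β ∈ EltrStar boxCompl (wordOf K i) ↔ β ∈ ESet boxCompl ∧ K i ∈ selectedSets β i := by
  unfold wordOf
  split_ifs with h
  · simp [EltrStar, mem_selectedSets_iff h]
  · have hKi : K i = univ := by tauto
    simp [EltrStar, selectedSets, hKi]

theorem mem_realizeStar_wordOf_iff {K : ∀ i, Set (X i)} (hK : IsBox K)
    {B : Fin d → Set (BoxAlphabet X)} :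
    B ∈ realizeStar boxCompl (wordOf K) ↔
      (∀ i, B i ∈ ESet boxCompl) ∧ ∀ i, K i ∈ selectedSets (B i) i := by
  simp only [realizeStar, mem_ofPred_eq, mem_eltrStar_wordOf_iff (hK _), forall_and]

theorem iUnion_realizeStar_wordOf_subset {𝓕 𝓖 : Set (∀ i, Set (X i))} (h𝓕 : IsSuit 𝓕)
    (h𝓖 : IsSuit 𝓖) (h : ⋃ K ∈ 𝓕, boxSet K = ⋃ G ∈ 𝓖, boxSet G) :
    ⋃ K ∈ 𝓕, realizeStar boxCompl (wordOf K) ⊆ ⋃ G ∈ 𝓖, realizeStar boxCompl (wordOf G) := by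
  simp only [subset_def, mem_iUnion₂, exists_prop]
  rintro B ⟨K, hK, hBK⟩
  obtain ⟨hB, hK𝒜⟩ := (mem_realizeStar_wordOf_iff (h𝓕.1 K hK)).1 hBK
  have : ∀ i, Nonempty (X i) := fun i => ⟨(h𝓕.1 K hK i).some⟩
  obtain ⟨G, hG, hG𝒜⟩ := (exists_forall_mem_iff_of_iUnion_eq
    (fun i => isComplSelector_selectedSets (hB i)) h𝓕.2 h𝓖.2 h).1 ⟨K, hK, hK𝒜⟩
  exact ⟨G, hG, (mem_realizeStar_wordOf_iff (h𝓖.1 G hG)).2 ⟨hB, hG𝒜⟩⟩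

end Realization

theorem suits_give_equivalent_codes_general {d : ℕ} {X : Fin d → Type*}
    (F : Set (∀ i, X i)) (𝓕 𝓖 : Set (∀ i, Set (X i)))
    (h𝓕 : IsSuit 𝓕) (h𝓖 : IsSuit 𝓖)
    (h𝓕F : (⋃ K ∈ 𝓕, boxSet K) = F)
    (h𝓖F : (⋃ G ∈ 𝓖, boxSet G) = F) :
    (⋃ K ∈ 𝓕, realizeStar (boxCompl (X := X)) (wordOf K)) =
      ⋃ G ∈ 𝓖, realizeStar (boxCompl (X := X)) (wordOf G) := by
  have h := h𝓕F.trans h𝓖F.symm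
  exact (iUnion_realizeStar_wordOf_subset h𝓕 h𝓖 h).antisymm
    (iUnion_realizeStar_wordOf_subset h𝓖 h𝓕 h.symm)

/-- If `𝓕` and `𝓖` are suits for the same polybox `F` in a finite `d`-box `X`,
then the associated polybox codes `{w(K) : K ∈ 𝓕}` and `{w(G) : G ∈ 𝓖}` are
equivalent: `⋃_{v} v̌ = ⋃_{w} w̌`. -/
theorem suits_give_equivalent_codes {d : ℕ} {X : Fin d → Type*}
    [∀ i, Fintype (X i)] [∀ i, Nontrivial (X i)]
    (F : Set (∀ i, X i)) (𝓕 𝓖 : Set (∀ i, Set (X i)))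
    (h𝓕 : IsSuit 𝓕) (h𝓖 : IsSuit 𝓖)
    (h𝓕F : (⋃ K ∈ 𝓕, boxSet K) = F)
    (h𝓖F : (⋃ G ∈ 𝓖, boxSet G) = F) :
    (⋃ K ∈ 𝓕, realizeStar (boxCompl (X := X)) (wordOf K)) =
      ⋃ G ∈ 𝓖, realizeStar (boxCompl (X := X)) (wordOf G) :=
  suits_give_equivalent_codes_general F 𝓕 𝓖 h𝓕 h𝓖 h𝓕F h𝓖F
end

section
/- Let G be a finite simple graph with a nonempty edge set, and let m = max{deg(u) + deg(v) : u and v are adjacent in G}. Then the average degree of G is at most m/2; equivalently, 2·∑_{v ∈ V(G)} deg(v) ≤ m·|V(G)|. -/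
/-!
Summing `deg u + deg v ≤ m` over all ordered adjacent pairs gives `2 ∑ deg² ≤ m ∑ deg`, since
each vertex `v` contributes `deg v` once for each of its `deg v` neighbours on either side.
Cauchy–Schwarz, `(∑ deg)² ≤ |V| ∑ deg²`, then yields `2 (∑ deg)² ≤ m |V| ∑ deg`, and one
cancels `∑ deg` (the claim is trivial when it vanishes).
-/

open Finset

namespace SimpleGraph

variable {V : Type*} [Fintype V] (G : SimpleGraph V) [DecidableRel G.Adj]

theorem sum_sum_neighborFinset {M : Type*} [AddCommMonoid M] (f : V → M) :
    ∑ v, ∑ u ∈ G.neighborFinset v, f u = ∑ u, G.degree u • f u := by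
  rw [Finset.sum_comm' (t' := univ) (s' := fun u => G.neighborFinset u)]
  · simp only [sum_const, card_neighborFinset_eq_degree]
  · simp [adj_comm]

theorem sum_sum_neighborFinset_degree_add :
    ∑ v, ∑ u ∈ G.neighborFinset v, (G.degree v + G.degree u) = 2 * ∑ v, G.degree v ^ 2 := by
  simp only [sum_add_distrib, sum_const, card_neighborFinset_eq_degree, smul_eq_mul,
    sum_sum_neighborFinset]
  ring_nf

theorem two_mul_sum_degree_sq_le {m : ℕ} (hm : ∀ u v, G.Adj u v → G.degree u + G.degree v ≤ m) :
    2 * ∑ v, G.degree v ^ 2 ≤ m * ∑ v, G.degree v := by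
  calc 2 * ∑ v, G.degree v ^ 2
      = ∑ v, ∑ u ∈ G.neighborFinset v, (G.degree v + G.degree u) :=
        (G.sum_sum_neighborFinset_degree_add).symm
    _ ≤ ∑ v, ∑ _u ∈ G.neighborFinset v, m :=
        sum_le_sum fun v _ => sum_le_sum fun u hu => hm v u ((G.mem_neighborFinset v u).mp hu)
    _ = m * ∑ v, G.degree v := by
        simp only [sum_const, card_neighborFinset_eq_degree, smul_eq_mul, mul_sum, mul_comm]

end SimpleGraph

theorem avg_degree_le_max_adjacent_degree_sum_general {V : Type*} [Fintype V]
    (G : SimpleGraph V) [DecidableRel G.Adj]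
    (m : ℕ)
    (hm : IsGreatest {n | ∃ u v, G.Adj u v ∧ n = G.degree u + G.degree v} m) :
    2 * ∑ v, G.degree v ≤ m * Fintype.card V := by
  set S := ∑ v, G.degree v
  have hsq : 2 * ∑ v, G.degree v ^ 2 ≤ m * S :=
    G.two_mul_sum_degree_sq_le fun u v huv => hm.2 ⟨u, v, huv, rfl⟩
  have hcs : S ^ 2 ≤ Fintype.card V * ∑ v, G.degree v ^ 2 := by
    simpa using sq_sum_le_card_mul_sum_sq (s := univ) (f := fun v => G.degree v)
  rcases Nat.eq_zero_or_pos S with hS | hS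
  · simp [hS]
  refine Nat.le_of_mul_le_mul_right ?_ hS
  calc 2 * S * S = 2 * S ^ 2 := by ring
    _ ≤ 2 * (Fintype.card V * ∑ v, G.degree v ^ 2) := by gcongr
    _ = Fintype.card V * (2 * ∑ v, G.degree v ^ 2) := by ring
    _ ≤ Fintype.card V * (m * S) := by gcongr
    _ = m * Fintype.card V * S := by ring

/-- Let `G` be a finite simple graph with at least one edge, and let `m` be the
maximum of `deg u + deg v` over adjacent pairs `u, v`. Then the average degree
of `G` is at most `m/2`; equivalently `2·∑ deg v ≤ m·|V(G)|`. -/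
theorem avg_degree_le_max_adjacent_degree_sum {V : Type*} [Fintype V]
    (G : SimpleGraph V) [DecidableRel G.Adj]
    (hE : G.edgeSet.Nonempty) (m : ℕ)
    (hm : IsGreatest {n | ∃ u v, G.Adj u v ∧ n = G.degree u + G.degree v} m) :
    2 * ∑ v, G.degree v ≤ m * Fintype.card V :=
  avg_degree_le_max_adjacent_degree_sum_general G m hm
end

section
/- Let S be a finite alphabet with complementation, V ⊆ S^d a polybox code, and w ∈ S^d \ V with w̌ ⊆ ⋃_{v ∈ V} v̌. Suppose there are i ∈ [d] and l ∈ S with l ∉ {w_i, w_i'} such that exactly one word v ∈ V satisfies v_i = l and w̌ ∩ v̌ ≠ ∅, and the number of words v ∈ V with v_i = l' and w̌ ∩ v̌ ≠ ∅ is at least 1 and at most 4. Then V contains a twin pair. -/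
/-!
Let `v₀` be the only word with `v₀ i = l` meeting `w̌`, and `T` the words with `v i = l'` meeting
`w̌`. A point of `w̌ ∩ v̌`, `v ∈ T`, moved at coordinate `i` to side `l` stays in `w̌`, so it lies
in `v̌₀`; a point of `w̌ ∩ v̌₀` moved back lies in `v̌` for some `v ∈ T`. Hence every `v ∈ T` agrees
with `v₀` off `i` wherever `v₀` differs from `w`, and if `T = {v₁}` then `v₀, v₁` are twins.
Otherwise, on the coordinates `j ≠ i` with `v₀ j = w j`, the words of `T` read relative to `w`
are subcubes tiling a Boolean cube with one bit per complementary pair in each position. By a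
volume count, a tiling by two to four subcubes either has a half-cube tile, and we recurse on the
other half, or consists of four quarter-cubes, two of which share a fixed bit; either way two
tiles differ in a single fixed bit, and they come from twin words.
-/

namespace Subcube

open Finset

variable {ι : Type*}

/-- Subcubes of `ι → Bool` are partial assignments `ι → Option Bool`, `none` marking a free
coordinate. -/
def Mem (p : ι → Option Bool) (z : ι → Bool) : Prop :=
  ∀ x b, p x = some b → z x = b

def Refines (p ρ : ι → Option Bool) : Prop :=
  ∀ x b, ρ x = some b → p x = some b

def Conflict (p q : ι → Option Bool) : Prop :=
  ∃ x b, p x = some b ∧ q x = some !b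

def Twin (p q : ι → Option Bool) : Prop :=
  ∃ x₀ b, p x₀ = some b ∧ q x₀ = some !b ∧ ∀ x, x ≠ x₀ → p x = q x

structure IsTiling {κ : Type*} (T : Finset κ) (p : κ → ι → Option Bool)
    (ρ : ι → Option Bool) : Prop where
  refines : ∀ t ∈ T, Refines (p t) ρ
  conflict : ∀ s ∈ T, ∀ t ∈ T, s ≠ t → Conflict (p s) (p t)
  cover : ∀ z, Mem ρ z → ∃ t ∈ T, Mem (p t) z

variable {p q ρ : ι → Option Bool}

theorem Refines.mem {z : ι → Bool} (h : Refines p ρ) (hz : Mem p z) : Mem ρ z :=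
  fun x b hx => hz x b (h x b hx)

theorem Conflict.not_mem {z : ι → Bool} (h : Conflict p q) (hp : Mem p z) : ¬ Mem q z := by
  obtain ⟨x, b, hpx, hqx⟩ := h
  intro hq
  simpa [hp x b hpx] using hq x _ hqx

theorem Refines.eq_none_of_conflict {x : ι} {b : Bool} (hp : Refines p ρ) (hq : Refines q ρ)
    (hpx : p x = some b) (hqx : q x = some !b) : ρ x = none := by
  cases hρ : ρ x with
  | none => rfl
  | some a => simp [hp x a hρ, hq x a hρ] at hpx hqx; simp [← hpx] at hqx

theorem IsTiling.erase_update [DecidableEq ι] {κ : Type*} [DecidableEq κ] {T : Finset κ}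
    {P : κ → ι → Option Bool} (h : IsTiling T P ρ) {σ : κ} (hσ : σ ∈ T) {x : ι} {a : Bool}
    (hx : ρ x = none) (hσx : P σ x = some a) (hother : ∀ t ∈ T, t ≠ σ → P t x = some !a) :
    IsTiling (T.erase σ) P (Function.update ρ x (some !a)) where
  refines t ht y b hy := by
    obtain ⟨htσ, ht⟩ := mem_erase.mp ht
    by_cases hyx : y = x
    · subst hyx
      rw [Function.update_self, Option.some.injEq] at hy
      rw [← hy]
      exact hother t ht htσ
    · rw [Function.update_of_ne hyx] at hy
      exact h.refines t ht y b hy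
  conflict s hs t ht := h.conflict s (mem_of_mem_erase hs) t (mem_of_mem_erase ht)
  cover z hz := by
    have hzρ : Mem ρ z := fun y b hy => hz y b <| by
      rwa [Function.update_of_ne (by rintro rfl; simp [hx] at hy)]
    obtain ⟨t, ht, hzt⟩ := h.cover z hzρ
    refine ⟨t, mem_erase.mpr ⟨?_, ht⟩, hzt⟩
    rintro rfl
    simpa [hz x _ (Function.update_self ..)] using hzt x a hσx

section Fintype

variable [Fintype ι]

def free (p : ι → Option Bool) : Finset ι := {x | p x = none}

theorem mem_free {x : ι} : x ∈ free p ↔ p x = none := by simp [free]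

theorem Refines.free_subset (h : Refines p ρ) : free p ⊆ free ρ := by
  intro x hx
  rw [mem_free] at hx ⊢
  cases hρ : ρ x with
  | none => rfl
  | some b => simp [h x b hρ] at hx

variable [DecidableEq ι]

instance (p : ι → Option Bool) : DecidablePred (Mem p) :=
  fun z => inferInstanceAs (Decidable (∀ x b, p x = some b → z x = b))

theorem card_mem_eq_two_pow (p : ι → Option Bool) : #{z | Mem p z} = 2 ^ #(free p) := by
  have hcube : ({z | Mem p z} : Finset (ι → Bool)) =
      Fintype.piFinset fun x => (p x).elim univ singleton := by
    ext z
    rw [mem_filter_univ, Fintype.mem_piFinset]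
    refine forall_congr' fun x => ?_
    cases p x <;> simp
  rw [hcube, Fintype.card_piFinset, free, card_filter, ← prod_pow_eq_pow_sum]
  refine prod_congr rfl fun x _ => ?_
  cases p x <;> simp

theorem Refines.free_eq_sdiff {A : Finset ι} (h : Refines p ρ) (hAρ : A ⊆ free ρ)
    (hA : ∀ x ∈ A, p x ≠ none) (hcard : #(free ρ) ≤ #(free p) + #A) :
    free p = free ρ \ A := by
  refine eq_of_subset_of_card_le (fun x hx => mem_sdiff.mpr ⟨h.free_subset hx, ?_⟩) ?_
  · exact fun hxA => hA x hxA (mem_free.mp hx)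
  · rw [card_sdiff_of_subset hAρ]
    omega

theorem Refines.twin_of_free_eq (hp : Refines p ρ) (hq : Refines q ρ) (hfree : free p = free q)
    {x₀ : ι} {b : Bool} (hpx : p x₀ = some b) (hqx : q x₀ = some !b)
    (hagree : ∀ x ∈ free ρ \ free p, x ≠ x₀ → p x = q x) : Twin p q := by
  refine ⟨x₀, b, hpx, hqx, fun x hx => ?_⟩
  by_cases hxρ : x ∈ free ρ
  · by_cases hxp : x ∈ free p
    · rw [mem_free.mp hxp, mem_free.mp (hfree ▸ hxp : x ∈ free q)]
    · exact hagree x (mem_sdiff.mpr ⟨hxρ, hxp⟩) hx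
  · obtain ⟨a, ha⟩ := Option.ne_none_iff_exists'.mp (mt mem_free.mpr hxρ)
    rw [hp x a ha, hq x a ha]

variable {κ : Type*} {T : Finset κ} {P : κ → ι → Option Bool}

theorem IsTiling.sum_two_pow_card_free (h : IsTiling T P ρ) :
    ∑ t ∈ T, 2 ^ #(free (P t)) = 2 ^ #(free ρ) := by
  have hcube : ({z | Mem ρ z} : Finset (ι → Bool)) = T.biUnion fun t => {z | Mem (P t) z} := by
    ext z
    simp only [mem_filter_univ, mem_biUnion]
    exact ⟨h.cover z, fun ⟨t, ht, hz⟩ => (h.refines t ht).mem hz⟩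
  rw [← card_mem_eq_two_pow, hcube, card_biUnion]
  · exact sum_congr rfl fun t _ => (card_mem_eq_two_pow (P t)).symm
  · intro s hs t ht hst
    exact disjoint_filter.mpr fun z _ hz => (h.conflict s hs t ht hst).not_mem hz

theorem IsTiling.card_free_lt (h : IsTiling T P ρ) (hT : 2 ≤ #T) {t : κ} (ht : t ∈ T) :
    #(free (P t)) < #(free ρ) := by
  obtain ⟨s, hs, hst⟩ := exists_mem_ne hT t
  have hlt := single_lt_sum (f := fun t => 2 ^ #(free (P t))) hst ht hs (by positivity)
    fun _ _ _ => by positivity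
  rw [h.sum_two_pow_card_free] at hlt
  exact (Nat.pow_lt_pow_iff_right (by norm_num)).mp hlt

theorem IsTiling.apply_eq_some_not (h : IsTiling T P ρ) {σ : κ} (hσ : σ ∈ T) {x : ι}
    {a : Bool} (hfree : free (P σ) = free ρ \ {x}) (hσx : P σ x = some a) {t : κ} (ht : t ∈ T)
    (htσ : t ≠ σ) : P t x = some !a := by
  obtain ⟨y, b, hσy, hty⟩ := h.conflict σ hσ t ht htσ.symm
  have hyρ := (h.refines σ hσ).eq_none_of_conflict (h.refines t ht) hσy hty
  obtain rfl : y = x := by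
    by_contra hyx
    have hy : y ∈ free (P σ) := hfree ▸ mem_sdiff.mpr ⟨mem_free.mpr hyρ, by simpa using hyx⟩
    simp [mem_free.mp hy] at hσy
  rw [hσx, Option.some.injEq] at hσy
  rwa [hσy]

theorem IsTiling.twin_of_card_eq_two [DecidableEq κ] (h : IsTiling T P ρ) (hT : #T = 2)
    {σ τ : κ} (hσ : σ ∈ T) (hτ : τ ∈ T) (hστ : σ ≠ τ) {x : ι} {a : Bool} (hxρ : x ∈ free ρ)
    (hfree : free (P σ) = free ρ \ {x}) (hσx : P σ x = some a) (hτx : P τ x = some !a) :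
    Twin (P σ) (P τ) := by
  have hTστ : T = {σ, τ} :=
    (eq_of_subset_of_card_le (insert_subset hσ (singleton_subset_iff.mpr hτ))
      (by rw [hT, card_pair hστ])).symm
  have hsum := h.sum_two_pow_card_free
  rw [hTστ, sum_pair hστ, hfree, card_sdiff_of_subset (singleton_subset_iff.mpr hxρ),
    card_singleton] at hsum
  have hpos : 0 < #(free ρ) := card_pos.mpr ⟨x, hxρ⟩
  have hcard : #(free (P τ)) + 1 = #(free ρ) := by
    have h2 : 2 ^ #(free (P τ)) = 2 ^ (#(free ρ) - 1) := by
      have : 2 ^ #(free ρ) = 2 * 2 ^ (#(free ρ) - 1) := by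
        rw [← pow_succ']; congr 1; omega
      omega
    have := Nat.pow_right_injective le_rfl h2
    omega
  have hfreeτ : free (P τ) = free ρ \ {x} :=
    (h.refines τ hτ).free_eq_sdiff (singleton_subset_iff.mpr hxρ) (by simp [hτx])
      (by rw [card_singleton]; omega)
  refine (h.refines σ hσ).twin_of_free_eq (h.refines τ hτ) (hfree.trans hfreeτ.symm) hσx hτx ?_
  intro y hy hyx
  simp [hfree, hyx] at hy

theorem IsTiling.card_eq_four_of_two_le_codim (h : IsTiling T P ρ) (h4 : #T ≤ 4)
    (h2 : ∀ t ∈ T, #(free (P t)) + 2 ≤ #(free ρ)) :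
    #T = 4 ∧ ∀ t ∈ T, #(free (P t)) + 2 = #(free ρ) := by
  have hle : ∀ t ∈ T, 4 * 2 ^ #(free (P t)) ≤ 2 ^ #(free ρ) := fun t ht =>
    calc 4 * 2 ^ #(free (P t)) = 2 ^ (#(free (P t)) + 2) := by ring
      _ ≤ 2 ^ #(free ρ) := Nat.pow_le_pow_right (by norm_num) (h2 t ht)
  have hsum : ∑ t ∈ T, 4 * 2 ^ #(free (P t)) = ∑ _t ∈ T, 2 ^ #(free ρ) := by
    refine le_antisymm (sum_le_sum hle) ?_
    rw [← mul_sum, h.sum_two_pow_card_free, sum_const, smul_eq_mul]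
    exact Nat.mul_le_mul_right _ h4
  refine ⟨?_, fun t ht => ?_⟩
  · rw [← mul_sum, h.sum_two_pow_card_free, sum_const, smul_eq_mul] at hsum
    have := Nat.eq_of_mul_eq_mul_right (by positivity) hsum
    omega
  · have ht := (sum_eq_sum_iff_of_le hle).mp hsum t ht
    rw [show 4 * 2 ^ #(free (P t)) = 2 ^ (#(free (P t)) + 2) by ring] at ht
    exact Nat.pow_right_injective le_rfl ht

theorem IsTiling.twin_of_codim_two (h : IsTiling T P ρ)
    (hcodim : ∀ t ∈ T, #(free (P t)) + 2 = #(free ρ)) {s t : κ} (hs : s ∈ T) (ht : t ∈ T)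
    (hst : s ≠ t) {e : ι} (he : e ∈ free ρ) {b : Bool} (hse : P s e = some b)
    (hte : P t e = some b) : Twin (P s) (P t) := by
  obtain ⟨y, a, hsy, hty⟩ := h.conflict s hs t ht hst
  have hyρ := mem_free.mpr ((h.refines s hs).eq_none_of_conflict (h.refines t ht) hsy hty)
  have hye : y ≠ e := by
    rintro rfl
    simp [hse] at hsy
    simp [hte, ← hsy] at hty
  have hfree : ∀ u ∈ T, P u e ≠ none → P u y ≠ none → free (P u) = free ρ \ {e, y} :=
    fun u hu hue huy => (h.refines u hu).free_eq_sdiff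
      (by simp [insert_subset_iff, he, hyρ]) (by simp [hue, huy])
      (by rw [card_pair hye.symm, hcodim u hu])
  have hfs := hfree s hs (by simp [hse]) (by simp [hsy])
  refine (h.refines s hs).twin_of_free_eq (h.refines t ht)
    (hfs.trans (hfree t ht (by simp [hte]) (by simp [hty])).symm) hsy hty ?_
  intro x hx hxy
  obtain rfl : x = e := by simp only [hfs, sdiff_sdiff_right_self] at hx; simp_all
  rw [hse, hte]

theorem IsTiling.exists_twin_of_codim_two [DecidableEq κ] (h : IsTiling T P ρ) (h4 : #T = 4)
    (hcodim : ∀ t ∈ T, #(free (P t)) + 2 = #(free ρ)) :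
    ∃ s ∈ T, ∃ t ∈ T, Twin (P s) (P t) := by
  obtain ⟨σ, hσ⟩ : T.Nonempty := card_pos.mp (by omega)
  have hconflict : ∀ t ∈ T.erase σ, ∃ e ∈ free ρ \ free (P σ), ∃ b,
      P σ e = some b ∧ P t e = some !b := by
    intro t ht
    obtain ⟨e, b, hσe, hte⟩ := h.conflict σ hσ t (mem_of_mem_erase ht) (ne_of_mem_erase ht).symm
    refine ⟨e, mem_sdiff.mpr ⟨mem_free.mpr ?_, by simp [mem_free, hσe]⟩, b, hσe, hte⟩
    exact (h.refines σ hσ).eq_none_of_conflict (h.refines t (mem_of_mem_erase ht)) hσe hte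
  obtain ⟨x₀, -⟩ : (free ρ).Nonempty := card_pos.mp (by have := hcodim σ hσ; omega)
  have : Nonempty ι := ⟨x₀⟩
  choose! e he b hσb htb using hconflict
  have hcard : #(free ρ \ free (P σ)) < #(T.erase σ) := by
    rw [card_sdiff_of_subset (h.refines σ hσ).free_subset, card_erase_of_mem hσ]
    have := hcodim σ hσ
    omega
  obtain ⟨s, hs, t, ht, hst, hest⟩ := exists_ne_map_eq_of_card_lt_of_maps_to hcard he
  have hb : b t = b s := by
    simpa [hest, hσb t ht] using hσb s hs
  refine ⟨s, mem_of_mem_erase hs, t, mem_of_mem_erase ht, ?_⟩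
  refine h.twin_of_codim_two hcodim (mem_of_mem_erase hs) (mem_of_mem_erase ht) hst
    (mem_sdiff.mp (he s hs)).1 (htb s hs) ?_
  rw [hest, htb t ht, hb]

theorem IsTiling.exists_twin [DecidableEq κ] (h : IsTiling T P ρ) (h2 : 2 ≤ #T) (h4 : #T ≤ 4) :
    ∃ s ∈ T, ∃ t ∈ T, Twin (P s) (P t) := by
  induction hn : #T using Nat.strong_induction_on generalizing T ρ with
  | _ n ih =>
  by_cases hone : ∃ σ ∈ T, #(free (P σ)) + 1 = #(free ρ)
  · obtain ⟨σ, hσ, hcodim⟩ := hone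
    have hsub := (h.refines σ hσ).free_subset
    obtain ⟨x, hx⟩ : ∃ x, free ρ \ free (P σ) = {x} :=
      card_eq_one.mp (by rw [card_sdiff_of_subset hsub]; omega)
    have hxρ : x ∈ free ρ := (mem_sdiff.mp (hx ▸ mem_singleton_self x)).1
    obtain ⟨a, ha⟩ := Option.ne_none_iff_exists'.mp
      (mt mem_free.mpr (mem_sdiff.mp (hx ▸ mem_singleton_self x)).2)
    have hfree : free (P σ) = free ρ \ {x} :=
      (h.refines σ hσ).free_eq_sdiff (singleton_subset_iff.mpr hxρ) (by simp [ha])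
        (by rw [card_singleton]; omega)
    have hother : ∀ t ∈ T, t ≠ σ → P t x = some !a := fun t => h.apply_eq_some_not hσ hfree ha
    by_cases hT2 : #T = 2
    · obtain ⟨τ, hτ, hτσ⟩ := exists_mem_ne h2 σ
      exact ⟨σ, hσ, τ, hτ,
        h.twin_of_card_eq_two hT2 hσ hτ hτσ.symm hxρ hfree ha (hother τ hτ hτσ)⟩
    · obtain ⟨s, hs, t, ht, hst⟩ := ih (n - 1) (by omega)
        (h.erase_update hσ (mem_free.mp hxρ) ha hother) (by rw [card_erase_of_mem hσ]; omega)
        (by rw [card_erase_of_mem hσ]; omega) (by rw [card_erase_of_mem hσ, hn])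
      exact ⟨s, mem_of_mem_erase hs, t, mem_of_mem_erase ht, hst⟩
  · push Not at hone
    have h2' : ∀ t ∈ T, #(free (P t)) + 2 ≤ #(free ρ) := fun t ht => by
      have := h.card_free_lt h2 ht
      have := hone t ht
      omega
    obtain ⟨h4', hcodim⟩ := h.card_eq_four_of_two_le_codim h4 h2'
    exact h.exists_twin_of_codim_two h4' hcodim

end Fintype

end Subcube

section Realize

variable {S : Type*} {c : S → S} {d : ℕ}

theorem exists_mem_eSet_superset (hinv : ∀ s, c (c s) = s) (hne : ∀ s, c s ≠ s) {P : Set S}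
    (hP : ∀ s ∈ P, c s ∉ P) : ∃ X ∈ ESet c, P ⊆ X := by
  let _ : LinearOrder S := IsWellOrder.linearOrder WellOrderingRel
  refine ⟨{s | s ∈ P ∨ (c s ∉ P ∧ s < c s)}, fun s => ?_, fun s hs => Or.inl hs⟩
  have := hP s
  have := hP (c s)
  have := hne s
  simp only [Set.mem_ofPred_eq, hinv] at *
  grind

theorem Dichotomous.disjoint_realize {u v : Fin d → S} (h : Dichotomous c u v) :
    Disjoint (realize c u) (realize c v) := by
  obtain ⟨j, hj⟩ := h
  refine Set.disjoint_left.mpr fun B hu hv => ?_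
  exact ((hu j).1 (u j)).mp (hu j).2 (hj ▸ (hv j).2)

theorem not_dichotomous_of_nonempty {u v : Fin d → S} (h : (realize c u ∩ realize c v).Nonempty) :
    ¬ Dichotomous c u v :=
  fun hd => Set.not_disjoint_iff_nonempty_inter.mpr h hd.disjoint_realize

theorem exists_mem_realize_of_not_dichotomous (hinv : ∀ s, c (c s) = s) (hne : ∀ s, c s ≠ s)
    (U : Set (Fin d → S)) (hU : ∀ u ∈ U, ∀ v ∈ U, ¬ Dichotomous c u v) :
    ∃ B, ∀ u ∈ U, B ∈ realize c u := by
  have hP : ∀ j, ∀ s ∈ (· j) '' U, c s ∉ (· j) '' U := by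
    rintro j _ ⟨u, hu, rfl⟩ ⟨v, hv, hvj⟩
    exact hU u hu v hv ⟨j, hvj⟩
  choose X hX hPX using fun j => exists_mem_eSet_superset hinv hne (hP j)
  exact ⟨X, fun u hu j => ⟨hX j, hPX j ⟨u, hu, rfl⟩⟩⟩

theorem insert_diff_mem_eSet (hinv : ∀ s, c (c s) = s) (hne : ∀ s, c s ≠ s) {X : Set S}
    (hX : X ∈ ESet c) (s : S) : insert s (X \ {c s}) ∈ ESet c := by
  intro t
  have := hX t
  have := hne s
  have := hinv t
  have := hinv s
  simp only [Set.mem_insert_iff, Set.mem_sdiff, Set.mem_singleton_iff]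
  grind

theorem eq_or_eq_of_forall_mem (hinv : ∀ s, c (c s) = s) (hne : ∀ s, c s ≠ s)
    {w u v : Fin d → S} (hwu : ¬ Dichotomous c w u) {j : Fin d}
    (h : ∀ B ∈ realize c w ∩ realize c u, v j ∈ B j) : v j = w j ∨ v j = u j := by
  by_contra! hv
  set w' := Function.update w j (c (v j))
  obtain ⟨B, hB⟩ := exists_mem_realize_of_not_dichotomous hinv hne {w, u, w'} <| by
    simp only [Dichotomous, Set.mem_insert_iff, Set.mem_singleton_iff, not_exists] at hwu ⊢
    rintro a (rfl | rfl | rfl) b (rfl | rfl | rfl) k <;>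
      (try simp only [w', Function.update_apply]) <;> (try split_ifs) <;> grind
  have hw'B := hB w' (by simp) j
  exact ((hw'B.1 (v j)).mp (h B ⟨hB w (by simp), hB u (by simp)⟩)) (by simpa [w'] using hw'B.2)

/-- Move a point of `w̌ ∩ v̌` at coordinate `i` from side `c s` to side `s`: it stays in `w̌`,
hence lies in `ǔ` for some `u ∈ V` with `u i = s`. -/
theorem exists_mem_flip (hinv : ∀ s, c (c s) = s) (hne : ∀ s, c s ≠ s)
    {V : Set (Fin d → S)} (hV : PolyboxCode c V) {w : Fin d → S}
    (hcov : realize c w ⊆ ⋃ v ∈ V, realize c v) {v : Fin d → S} (hv : v ∈ V) {i : Fin d}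
    {s : S} (hvi : v i = c s) (hwi : w i ≠ c s) {B : Fin d → Set S} (hBw : B ∈ realize c w)
    (hBv : B ∈ realize c v) :
    ∃ u ∈ V, u i = s ∧ (realize c w ∩ realize c u).Nonempty ∧ ∀ j ≠ i, u j ∈ B j := by
  set B' := Function.update B i (insert s (B i \ {c s}))
  have hB' : ∀ j ≠ i, B' j = B j := fun j hj => Function.update_of_ne hj _ _
  have hB'w : B' ∈ realize c w := by
    intro j
    rcases eq_or_ne j i with rfl | hj
    · exact ⟨by simpa [B'] using insert_diff_mem_eSet hinv hne (hBw j).1 s,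
        by simp [B', hwi, (hBw j).2]⟩
    · exact hB' j hj ▸ hBw j
  obtain ⟨u, hu, hB'u⟩ := Set.mem_iUnion₂.mp (hcov hB'w)
  have hagree : ∀ j ≠ i, u j ∈ B j := fun j hj => hB' j hj ▸ (hB'u j).2
  refine ⟨u, hu, ?_, ⟨B', hB'w, hB'u⟩, hagree⟩
  by_contra hui
  have hui' : u i ∈ B i ∧ u i ≠ c s := by simpa [B', hui] using (hB'u i).2
  have hBu : B ∈ realize c u := fun j => by
    rcases eq_or_ne j i with rfl | hj
    · exact ⟨(hBw j).1, hui'.1⟩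
    · exact hB' j hj ▸ hB'u j
  obtain rfl : u = v := by
    by_contra huv
    exact Set.disjoint_left.mp (hV u hu v hv huv).disjoint_realize hBu hBv
  exact hui'.2 hvi

end Realize

section Encoding

open Classical

variable {S : Type*} {c : S → S} {d : ℕ} {X : Set S}

noncomputable def pairRep (c : S → S) (X : Set S) (s : S) : S :=
  if s ∈ X then s else c s

theorem pairRep_eq_pairRep_iff (hinv : ∀ s, c (c s) = s) (hX : X ∈ ESet c) {s t : S} :
    pairRep c X s = pairRep c X t ↔ t = s ∨ t = c s := by
  have := hX s
  have := hX t
  have := hinv s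
  have := hinv t
  unfold pairRep
  split_ifs <;> grind

/-- Reading `t` relative to `w` on the positions `J`: at position `j`, the pair `{s, c s}` is the
bit `(j, pairRep c X s)` and the letter `s ≠ w j` fixes it to `s ∈ X`; `t j = w j` leaves
position `j` free. -/
noncomputable def wordCode (c : S → S) (X : Set S) (J : Finset (Fin d)) (w t : Fin d → S)
    (q : Fin d × S) : Option Bool :=
  if q.1 ∈ J ∧ t q.1 ≠ w q.1 ∧ pairRep c X (t q.1) = q.2 then some (decide (t q.1 ∈ X)) else none

variable {J : Finset (Fin d)} {w t u : Fin d → S}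

theorem wordCode_eq_some {j : Fin d} {r : S} {b : Bool} :
    wordCode c X J w t (j, r) = some b ↔
      j ∈ J ∧ t j ≠ w j ∧ pairRep c X (t j) = r ∧ decide (t j ∈ X) = b := by
  unfold wordCode
  split_ifs with h <;> simp at h ⊢ <;> tauto

theorem conflict_wordCode (hinv : ∀ s, c (c s) = s) (hX : X ∈ ESet c) {j : Fin d} (hj : j ∈ J)
    (ht : t j ≠ w j) (hu : u j ≠ w j) (hut : u j = c (t j)) :
    Subcube.Conflict (wordCode c X J w t) (wordCode c X J w u) := by
  refine ⟨(j, pairRep c X (t j)), decide (t j ∈ X), wordCode_eq_some.mpr ⟨hj, ht, rfl, rfl⟩,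
    wordCode_eq_some.mpr ⟨hj, hu, (pairRep_eq_pairRep_iff hinv hX).mpr ?_, ?_⟩⟩
  · rw [hut, hinv]
    exact Or.inr rfl
  · simp [hut, hX (t j)]

theorem eq_compl_of_wordCode (hinv : ∀ s, c (c s) = s) (hX : X ∈ ESet c) {q : Fin d × S}
    {b : Bool} (ht : wordCode c X J w t q = some b) (hu : wordCode c X J w u q = some !b) :
    u q.1 = c (t q.1) := by
  obtain ⟨-, -, htq, htb⟩ := wordCode_eq_some.mp ht
  obtain ⟨-, -, huq, hub⟩ := wordCode_eq_some.mp hu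
  rcases (pairRep_eq_pairRep_iff hinv hX).mp (htq.trans huq.symm) with h | h
  · simp [h, ← htb] at hub
  · exact h

theorem eq_of_wordCode_eq (hinv : ∀ s, c (c s) = s) (hX : X ∈ ESet c) {j : Fin d} (hj : j ∈ J)
    (h : ∀ r, wordCode c X J w t (j, r) = wordCode c X J w u (j, r)) : t j = u j := by
  have eq_of_ne : ∀ t u : Fin d → S, (∀ r, wordCode c X J w t (j, r) = wordCode c X J w u (j, r)) →
      t j ≠ w j → t j = u j := by
    intro t u h ht
    obtain ⟨-, -, huq, hub⟩ := wordCode_eq_some.mp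
      ((h _).symm.trans (wordCode_eq_some.mpr ⟨hj, ht, rfl, rfl⟩))
    rcases (pairRep_eq_pairRep_iff hinv hX).mp huq with h | h
    · exact h
    · have := hX (u j)
      simp [h] at hub
      tauto
  by_cases ht : t j = w j
  · by_cases hu : u j = w j
    · rw [ht, hu]
    · exact (eq_of_ne u t (fun r => (h r).symm) hu).symm
  · exact eq_of_ne t u h ht

def sideSet (c : S → S) (X : Set S) (w : Fin d → S) (z : Fin d × S → Bool) (j : Fin d) :
    Set S :=
  {s | s = w j ∨ (s ≠ c (w j) ∧ z (j, pairRep c X s) = decide (s ∈ X))}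

theorem sideSet_mem_realize (hinv : ∀ s, c (c s) = s) (hne : ∀ s, c s ≠ s) (hX : X ∈ ESet c)
    (z : Fin d × S → Bool) : sideSet c X w z ∈ realize c w := by
  refine fun j => ⟨fun s => ?_, Or.inl rfl⟩
  have hrep : pairRep c X (c s) = pairRep c X s :=
    (pairRep_eq_pairRep_iff hinv hX).mpr (Or.inr (hinv s).symm)
  have := hX s
  have := hinv s
  have := hne s
  have := hne (w j)
  simp only [sideSet, Set.mem_ofPred_eq, hrep]
  by_cases hs : s ∈ X <;> grind

theorem mem_wordCode_of_forall_mem_sideSet {z : Fin d × S → Bool}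
    (h : ∀ j ∈ J, t j ∈ sideSet c X w z j) : Subcube.Mem (wordCode c X J w t) z := by
  rintro ⟨j, r⟩ b hq
  obtain ⟨hj, htw, rfl, rfl⟩ := wordCode_eq_some.mp hq
  exact ((h j hj).resolve_left htw).2

end Encoding

open Finset in
theorem exists_twinPair_of_cover {S : Type*} [Fintype S] {c : S → S} {d : ℕ}
    (hinv : ∀ s, c (c s) = s) (hne : ∀ s, c s ≠ s) {T : Finset (Fin d → S)} (J : Finset (Fin d))
    {w : Fin d → S} (hT : PolyboxCode c (T : Set (Fin d → S)))
    (hw : ∀ t ∈ T, ¬ Dichotomous c w t) (hagree : ∀ t ∈ T, ∀ u ∈ T, ∀ j ∉ J, t j = u j)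
    (hcov : ∀ R ∈ realize c w, ∃ t ∈ T, ∀ j ∈ J, t j ∈ R j) (h2 : 2 ≤ #T) (h4 : #T ≤ 4) :
    ∃ t ∈ T, ∃ u ∈ T, TwinPair c t u := by
  classical
  obtain ⟨X, hX, -⟩ := exists_mem_eSet_superset hinv hne (P := ∅) (by simp)
  have htiling : Subcube.IsTiling T (wordCode c X J w) fun _ => none :=
    { refines := fun _ _ _ _ h => by simp at h
      conflict := fun t ht u hu htu => by
        obtain ⟨j, hj⟩ := hT t ht u hu htu
        have hjJ : j ∈ J := by
          by_contra hjJ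
          exact hne (u j) (hagree t ht u hu j hjJ ▸ hj).symm
        exact conflict_wordCode hinv hX hjJ (fun h => hw u hu ⟨j, by rw [hj, h]⟩)
          (fun h => hw t ht ⟨j, by rw [← h, hj, hinv]⟩) hj
      cover := fun z _ => by
        obtain ⟨t, ht, htz⟩ := hcov _ (sideSet_mem_realize hinv hne hX z)
        exact ⟨t, ht, mem_wordCode_of_forall_mem_sideSet htz⟩ }
  obtain ⟨t, ht, u, hu, q, b, htq, huq, hrest⟩ := htiling.exists_twin h2 h4
  refine ⟨t, ht, u, hu, q.1, eq_compl_of_wordCode hinv hX htq huq, fun j hj => ?_⟩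
  by_cases hjJ : j ∈ J
  · exact eq_of_wordCode_eq hinv hX hjJ fun r => hrest (j, r) fun h => hj (congrArg Prod.fst h)
  · exact hagree t ht u hu j hjJ

def meetingWords {S : Type*} (c : S → S) {d : ℕ} (V : Set (Fin d → S)) (w : Fin d → S)
    (i : Fin d) (s : S) : Set (Fin d → S) :=
  {v ∈ V | v i = s ∧ (realize c w ∩ realize c v).Nonempty}

section MeetingWords

variable {S : Type*} {c : S → S} {d : ℕ} {V : Set (Fin d → S)} {w v₀ : Fin d → S} {i : Fin d}
  {l : S}

theorem eq_or_eq_of_meetingWords_eq_singleton (hinv : ∀ s, c (c s) = s) (hne : ∀ s, c s ≠ s)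
    (hV : PolyboxCode c V) (hcov : realize c w ⊆ ⋃ v ∈ V, realize c v) (hwl : w i ≠ c l)
    (h₀ : meetingWords c V w i l = {v₀}) {v : Fin d → S} (hv : v ∈ meetingWords c V w i (c l))
    {j : Fin d} (hj : j ≠ i) : v₀ j = w j ∨ v₀ j = v j :=
  eq_or_eq_of_forall_mem hinv hne (not_dichotomous_of_nonempty hv.2.2) fun B hB => by
    obtain ⟨u, hu, hui, huw, huB⟩ := exists_mem_flip hinv hne hV hcov hv.1 hv.2.1 hwl hB.1 hB.2
    obtain rfl : u = v₀ := (h₀ ▸ ⟨hu, hui, huw⟩ : u ∈ ({v₀} : Set _))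
    exact huB j hj

theorem twinPair_of_meetingWords_eq_singleton (hinv : ∀ s, c (c s) = s) (hne : ∀ s, c s ≠ s)
    (hV : PolyboxCode c V) (hcov : realize c w ⊆ ⋃ v ∈ V, realize c v) (hwl : w i ≠ l)
    (hwl' : w i ≠ c l) {v₁ : Fin d → S} (h₀ : meetingWords c V w i l = {v₀})
    (h₁ : meetingWords c V w i (c l) = {v₁}) : TwinPair c v₀ v₁ := by
  have hv₀ : v₀ ∈ meetingWords c V w i (c (c l)) := by rw [hinv, h₀]; rfl
  have hv₁ : v₁ ∈ meetingWords c V w i (c l) := by rw [h₁]; rfl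
  refine ⟨i, by rw [hv₁.2.1, hv₀.2.1, hinv], fun j hj => ?_⟩
  have h₀₁ := eq_or_eq_of_meetingWords_eq_singleton hinv hne hV hcov hwl' h₀ hv₁ hj
  have h₁₀ := eq_or_eq_of_meetingWords_eq_singleton (l := c l) hinv hne hV hcov (by rwa [hinv])
    h₁ hv₀ hj
  grind

open Finset in
theorem exists_twinPair_of_meetingWords_eq_singleton [Fintype S] (hinv : ∀ s, c (c s) = s)
    (hne : ∀ s, c s ≠ s) (hV : PolyboxCode c V) (hcov : realize c w ⊆ ⋃ v ∈ V, realize c v)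
    (hwl : w i ≠ l) (hwl' : w i ≠ c l) (h₀ : meetingWords c V w i l = {v₀})
    (hT : (meetingWords c V w i (c l)).Finite) (h2 : 2 ≤ (meetingWords c V w i (c l)).ncard)
    (h4 : (meetingWords c V w i (c l)).ncard ≤ 4) : ∃ u ∈ V, ∃ v ∈ V, TwinPair c u v := by
  classical
  have hv₀ : v₀ ∈ meetingWords c V w i l := h₀ ▸ rfl
  obtain ⟨B₀, hB₀w, hB₀v₀⟩ := hv₀.2.2
  have hcard : (meetingWords c V w i (c l)).ncard = #hT.toFinset := Set.ncard_eq_toFinset_card _ hT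
  set J : Finset (Fin d) := {j | j ≠ i ∧ v₀ j = w j}
  have hagree : ∀ t ∈ hT.toFinset, ∀ u ∈ hT.toFinset, ∀ j ∉ J, t j = u j := by
    intro t ht u hu j hj
    rw [Set.Finite.mem_toFinset] at ht hu
    rcases eq_or_ne j i with rfl | hji
    · rw [ht.2.1, hu.2.1]
    · have hv₀w : v₀ j ≠ w j := fun h => hj (by simp [J, hji, h])
      have := eq_or_eq_of_meetingWords_eq_singleton hinv hne hV hcov hwl' h₀ ht hji
      have := eq_or_eq_of_meetingWords_eq_singleton hinv hne hV hcov hwl' h₀ hu hji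
      grind
  have hcovJ : ∀ R ∈ realize c w, ∃ t ∈ hT.toFinset, ∀ j ∈ J, t j ∈ R j := by
    intro R hR
    set B : Fin d → Set S := fun j => if j ∈ J then R j else B₀ j
    have hBw : B ∈ realize c w := fun j => by
      by_cases hj : j ∈ J <;> simp only [B, hj, if_true, if_false]
      exacts [hR j, hB₀w j]
    have hBv₀ : B ∈ realize c v₀ := fun j => by
      by_cases hj : j ∈ J <;> simp only [B, hj, if_true, if_false]
      exacts [(mem_filter.mp hj).2.2 ▸ hR j, hB₀v₀ j]
    obtain ⟨u, hu, hui, huw, huB⟩ :=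
      exists_mem_flip hinv hne hV hcov hv₀.1 (s := c l) (by rw [hinv, hv₀.2.1]) (by rwa [hinv])
        hBw hBv₀
    refine ⟨u, hT.mem_toFinset.mpr ⟨hu, hui, huw⟩, fun j hj => ?_⟩
    simpa [B, hj] using huB j (mem_filter.mp hj).2.1
  obtain ⟨t, ht, u, hu, htu⟩ := exists_twinPair_of_cover hinv hne J
    (by rw [hT.coe_toFinset]; exact fun t ht u hu => hV t ht.1 u hu.1)
    (fun t ht => not_dichotomous_of_nonempty (hT.mem_toFinset.mp ht).2.2) hagree hcovJ
    (hcard ▸ h2) (hcard ▸ h4)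
  exact ⟨t, (hT.mem_toFinset.mp ht).1, u, (hT.mem_toFinset.mp hu).1, htu⟩

end MeetingWords

theorem twinPair_of_single_word_cylinder_general {S : Type*} [Fintype S] (c : S → S)
    (hinv : ∀ s, c (c s) = s) (hne : ∀ s, c s ≠ s) {d : ℕ}
    (V : Set (Fin d → S)) (hV : PolyboxCode c V)
    (w : Fin d → S)
    (hcov : realize c w ⊆ ⋃ v ∈ V, realize c v)
    (i : Fin d) (l : S) (hl : l ≠ w i) (hl' : l ≠ c (w i))
    (h1 : {v ∈ V | v i = l ∧ (realize c w ∩ realize c v).Nonempty}.ncard = 1)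
    (h2 : 1 ≤ {v ∈ V | v i = c l ∧ (realize c w ∩ realize c v).Nonempty}.ncard)
    (h3 : {v ∈ V | v i = c l ∧ (realize c w ∩ realize c v).Nonempty}.ncard ≤ 4) :
    ∃ u ∈ V, ∃ v ∈ V, TwinPair c u v := by
  have hwl' : w i ≠ c l := fun h => hl' (by rw [h, hinv])
  obtain ⟨v₀, h₀⟩ : ∃ v₀, meetingWords c V w i l = {v₀} := Set.ncard_eq_one.mp h1
  rcases h2.eq_or_lt with hT1 | hT2
  · obtain ⟨v₁, h₁⟩ : ∃ v₁, meetingWords c V w i (c l) = {v₁} := Set.ncard_eq_one.mp hT1.symm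
    have hv₀ : v₀ ∈ V := (h₀ ▸ rfl : v₀ ∈ meetingWords c V w i l).1
    have hv₁ : v₁ ∈ V := (h₁ ▸ rfl : v₁ ∈ meetingWords c V w i (c l)).1
    exact ⟨v₀, hv₀, v₁, hv₁,
      twinPair_of_meetingWords_eq_singleton hinv hne hV hcov hl.symm hwl' h₀ h₁⟩
  · exact exists_twinPair_of_meetingWords_eq_singleton hinv hne hV hcov hl.symm hwl' h₀
      (Set.finite_of_ncard_pos h2) hT2 h3

/-- Suppose `w ∈ S^d \ V` is covered by the polybox code `V`, and for some
`i ∈ [d]` and letter `l ∉ {w_i, w_i'}` exactly one word `v ∈ V` with `v_i = l`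
meets `w̌`, while the number of words `v ∈ V` with `v_i = l'` meeting `w̌` is
between 1 and 4. Then `V` contains a twin pair. -/
theorem twinPair_of_single_word_cylinder {S : Type*} [Fintype S] (c : S → S)
    (hinv : ∀ s, c (c s) = s) (hne : ∀ s, c s ≠ s) {d : ℕ}
    (V : Set (Fin d → S)) (hV : PolyboxCode c V)
    (w : Fin d → S) (hw : w ∉ V)
    (hcov : realize c w ⊆ ⋃ v ∈ V, realize c v)
    (i : Fin d) (l : S) (hl : l ≠ w i) (hl' : l ≠ c (w i))
    (h1 : {v ∈ V | v i = l ∧ (realize c w ∩ realize c v).Nonempty}.ncard = 1)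
    (h2 : 1 ≤ {v ∈ V | v i = c l ∧ (realize c w ∩ realize c v).Nonempty}.ncard)
    (h3 : {v ∈ V | v i = c l ∧ (realize c w ∩ realize c v).Nonempty}.ncard ≤ 4) :
    ∃ u ∈ V, ∃ v ∈ V, TwinPair c u v :=
  twinPair_of_single_word_cylinder_general c hinv hne V hV w hcov i l hl hl' h1 h2 h3
end
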